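/- Let f be a transcendental entire function, let R > 0 be such that M(r, f) > r for all r ≥ R, and suppose that A_R(f) is a spider's web. Let (H_n)_{n≥0} and (L_n)_{n≥0} be the sequences of fundamental holes and loops for A_R(f). Then for every n ≥ 0, H_n contains the open disc {z ∈ ℂ : |z| < M^n(R, f)} and L_n ⊆ A_R^n(f). -/

import Mathlib

open Set Metric Topology Function Bornology

/-- The maximum modulus `M(r, f)` of `f` on the circle `|z| = r`. -/
noncomputable def maxMod (f : ℂ → ℂ) (r : ℝ) : ℝ :=
  sSup ((fun z => ‖f z‖) '' Metric.sphere (0 : ℂ) r)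

/-- `f` is a transcendental entire function: holomorphic on all of `ℂ` and not a polynomial. -/
def TranscEntire (f : ℂ → ℂ) : Prop :=
  Differentiable ℂ f ∧ ¬ ∃ p : Polynomial ℂ, ∀ z, f z = p.eval z

/-- The fast escaping set `A(f)` (with parameter `R`). -/
def fastEscaping (f : ℂ → ℂ) (R : ℝ) : Set ℂ :=
  {z | ∃ L : ℕ, ∀ n : ℕ, (maxMod f)^[n] R ≤ ‖f^[n + L] z‖}

/-- The `L`-th level `A_R^L(f)` of the fast escaping set. -/
def levelSet (f : ℂ → ℂ) (R : ℝ) (L : ℤ) : Set ℂ :=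
  {z | ∀ n : ℕ, 0 ≤ (n : ℤ) + L →
    (maxMod f)^[((n : ℤ) + L).toNat] R ≤ ‖f^[n] z‖}

/-- `E ⊆ ℂ` is an (infinite) spider's web. -/
def SpidersWeb (E : Set ℂ) : Prop :=
  IsConnected E ∧ ∃ G : ℕ → Set ℂ,
    (∀ n, IsOpen (G n) ∧ IsConnected (G n) ∧ Bornology.IsBounded (G n) ∧
      SimplyConnectedSpace (G n) ∧ G n ⊆ G (n + 1) ∧ frontier (G n) ⊆ E) ∧
    (⋃ n, G n) = Set.univ

/-- `K` is a connected component of the set `S`. -/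
def IsCompOf {X : Type*} [TopologicalSpace X] (K S : Set X) : Prop :=
  ∃ z ∈ S, K = connectedComponentIn S z

/-- The `n`-th fundamental hole for `A_R(f)`: the component of the complement of
`A_R^n(f)` containing `0`. -/
noncomputable def fundHole (f : ℂ → ℂ) (R : ℝ) (n : ℤ) : Set ℂ :=
  connectedComponentIn (levelSet f R n)ᶜ 0

/-- The `n`-th fundamental loop for `A_R(f)`. -/
noncomputable def fundLoop (f : ℂ → ℂ) (R : ℝ) (n : ℤ) : Set ℂ :=
  frontier (fundHole f R n)

/-!
The level set `A_R^n(f)` is closed, being cut out by the continuous conditions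
`M^{m+n}(R) ≤ |f^m(z)|`. Hence every component of its complement is open, so the frontier of
such a component cannot meet the complement: `L_n ⊆ A_R^n(f)`. The condition with `m = 0` says
`M^n(R) ≤ |z|`, so the disc `|z| < M^n(R)` lies in the complement, and being connected and
centred at `0`, in the component `H_n`.
-/

theorem IsClosed.frontier_connectedComponentIn_compl_subset {X : Type*} [TopologicalSpace X]
    [LocallyConnectedSpace X] {F : Set X} (hF : IsClosed F) (x : X) :
    frontier (connectedComponentIn Fᶜ x) ⊆ F := by
  intro y hy
  by_contra hyF
  rw [hF.isOpen_compl.connectedComponentIn.frontier_eq] at hy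
  obtain ⟨z, hzy, hzx⟩ := mem_closure_iff.mp hy.1 _ hF.isOpen_compl.connectedComponentIn
    (mem_connectedComponentIn hyF)
  refine hy.2 ?_
  rw [connectedComponentIn_eq hzx, ← connectedComponentIn_eq hzy]
  exact mem_connectedComponentIn hyF

theorem ball_subset_connectedComponentIn {E : Type*} [SeminormedAddCommGroup E]
    [NormedSpace ℝ E] {U : Set E} {x : E} {r : ℝ} (h : ball x r ⊆ U) :
    ball x r ⊆ connectedComponentIn U x := fun _ hy =>
  (convex_ball x r).isPreconnected.subset_connectedComponentIn
    (mem_ball_self (pos_of_mem_ball hy)) h hy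

theorem isClosed_levelSet {f : ℂ → ℂ} (hf : Continuous f) (R : ℝ) (L : ℤ) :
    IsClosed (levelSet f R L) := by
  simp only [levelSet, ofPred_forall]
  exact isClosed_iInter fun m => isClosed_iInter fun _ =>
    isClosed_le continuous_const (continuous_norm.comp (hf.iterate m))

theorem le_norm_of_mem_levelSet {f : ℂ → ℂ} {R : ℝ} {n : ℕ} {z : ℂ}
    (hz : z ∈ levelSet f R n) : (maxMod f)^[n] R ≤ ‖z‖ := by
  simpa using hz 0 (by positivity)

theorem stmt_16_general (f : ℂ → ℂ) (R : ℝ) (hf : TranscEntire f) :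
    ∀ n : ℕ, {z : ℂ | ‖z‖ < (maxMod f)^[n] R} ⊆ fundHole f R n ∧
      fundLoop f R n ⊆ levelSet f R n := by
  intro n
  refine ⟨?_, (isClosed_levelSet hf.1.continuous R n).frontier_connectedComponentIn_compl_subset 0⟩
  rw [← ball_zero_eq]
  exact ball_subset_connectedComponentIn fun z hz hmem =>
    (mem_ball_zero_iff.mp hz).not_ge (le_norm_of_mem_levelSet hmem)

/-- `H_n` contains the disc of radius `M^n(R)` and `L_n ⊆ A_R^n(f)`. -/
theorem stmt_16 (f : ℂ → ℂ) (R : ℝ) (hf : TranscEntire f) (hR : 0 < R)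
    (hM : ∀ r ≥ R, r < maxMod f r) (hweb : SpidersWeb (levelSet f R 0)) :
    ∀ n : ℕ, {z : ℂ | ‖z‖ < (maxMod f)^[n] R} ⊆ fundHole f R n ∧
      fundLoop f R n ⊆ levelSet f R n :=
  stmt_16_general f R hf
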